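/- arXiv:2209.03054 — 2 statements merged into one kernel-verified Lean document; each statement's English description precedes it below -/
import Mathlib

section
/- Let u : 2^[n] → ℝ≥0 be any set function with u(∅) = 0 and let L, O be permutations of [n]. Then for all i, j ∈ [n]: u(o_i | L_{j−1}) + Σ_{r=j}^n u(l_r | L_{r−1} ∪ {o_i}) = u([n]) − u(L_{j−1}), and likewise u(o_i | O_{i−1} ∪ L_{j−1}) + Σ_{r=j}^n [u(l_r | L_{r−1}) − b_{ir}] = u([n]) − u(L_{j−1}); consequently the two left-hand sides are equal. -/
open Finset

/-- The set of the first `k` elements of the list `L`. -/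
def prefSet {n : ℕ} (L : List (Fin n)) (k : ℕ) : Finset (Fin n) := (L.take k).toFinset

/-- Marginal value `f(e|S) = f(S ∪ {e}) - f S`. -/
noncomputable def marg {n : ℕ} (f : Finset (Fin n) → ℝ) (e : Fin n) (S : Finset (Fin n)) : ℝ :=
  f (insert e S) - f S

/-- `L` is a listing of all elements of `[n]` (a permutation of `[n]`). -/
def IsPermList {n : ℕ} (L : List (Fin n)) : Prop := L.Nodup ∧ ∀ x : Fin n, x ∈ L

/-- The objective value `∑_{i=1}^n c(S_i)(u(S_i) - u(S_{i-1}))`. -/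
noncomputable def objective {n : ℕ} (u c : Finset (Fin n) → ℝ) (L : List (Fin n)) : ℝ :=
  ∑ i ∈ Finset.range L.length,
    c (prefSet L (i + 1)) * (u (prefSet L (i + 1)) - u (prefSet L i))

/-- The element in (1-indexed) position `k` of the list `L`. -/
def elemAt {n : ℕ} [NeZero n] (L : List (Fin n)) (k : ℕ) : Fin n := L.getD (k - 1) default

/-- The quantity `b_{ij} = u(o_i | O_{i-1} ∪ L_{j-1}) - u(o_i | O_{i-1} ∪ L_{j-1} ∪ {l_j})`. -/
noncomputable def bmat {n : ℕ} [NeZero n] (u : Finset (Fin n) → ℝ) (L O : List (Fin n))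
    (i j : ℕ) : ℝ :=
  marg u (elemAt O i) (prefSet O (i - 1) ∪ prefSet L (j - 1)) -
    marg u (elemAt O i) (insert (elemAt L j) (prefSet O (i - 1) ∪ prefSet L (j - 1)))

/-- Monotone set function. -/
def Mono {n : ℕ} (f : Finset (Fin n) → ℝ) : Prop :=
  ∀ S : Finset (Fin n), ∀ i : Fin n, f S ≤ f (insert i S)

/-- Submodular set function. -/
def Submod {n : ℕ} (f : Finset (Fin n) → ℝ) : Prop :=
  ∀ S : Finset (Fin n), ∀ i j : Fin n, i ∉ S → j ∉ S →
    marg f i (insert j S) ≤ marg f i S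

/-- Second-order supermodular set function. -/
def SOSupermod {n : ℕ} (f : Finset (Fin n) → ℝ) : Prop :=
  ∀ S : Finset (Fin n), ∀ i j k : Fin n, i ∉ S → j ∉ S → k ∉ S →
    marg f i (insert k S) - marg f i (insert j (insert k S)) ≤
      marg f i S - marg f i (insert j S)

/-- Objective value of a length-(n+1) pseudo-neighbor sequence, where costs are
counted with multiplicity via the singleton costs `cs`. -/
noncomputable def pseudoObj {n : ℕ} (u : Finset (Fin n) → ℝ) (cs : Fin n → ℝ)
    (P : List (Fin n)) : ℝ :=
  ∑ k ∈ Finset.range P.length,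
    (((P.take (k + 1)).map cs).sum) * (u (prefSet P (k + 1)) - u (prefSet P k))

/-- The pseudo-neighbor of `L` obtained by inserting a second copy of the element in
(1-indexed) position `i` at (1-indexed) position `j`. -/
def pseudoNeighbor {n : ℕ} [NeZero n] (L : List (Fin n)) (i j : ℕ) : List (Fin n) :=
  L.insertIdx (j - 1) (elemAt L i)

/-- `L` is locally optimal with respect to insertions: no pseudo-neighbor has strictly
smaller objective value. -/
def LocallyOptimalInsertions {n : ℕ} [NeZero n] (u c : Finset (Fin n) → ℝ) (cs : Fin n → ℝ)
    (L : List (Fin n)) : Prop :=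
  ∀ i j : ℕ, 1 ≤ j → j < i → i ≤ n →
    objective u c L ≤ pseudoObj u cs (pseudoNeighbor L i j)

/-- The list obtained from `L` by removing the element in (1-indexed) position `i` and
reinserting it at (1-indexed) position `j`. -/
def moveList {n : ℕ} [NeZero n] (L : List (Fin n)) (i j : ℕ) : List (Fin n) :=
  (L.eraseIdx (i - 1)).insertIdx (j - 1) (elemAt L i)

/-- `L'` is a move-neighbor of `L`. -/
def IsMoveNeighbor {n : ℕ} [NeZero n] (L L' : List (Fin n)) : Prop :=
  ∃ i j : ℕ, 1 ≤ i ∧ i ≤ n ∧ 1 ≤ j ∧ j ≤ n ∧ i ≠ j ∧ L' = moveList L i j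

/-! Every sum telescopes along the chain `L_{j-1} ⊆ L_j ⊆ ⋯ ⊆ L_n = [n]`: for any set `A`,
`∑_{r=j}^n u(l_r | A ∪ L_{r-1}) = u([n]) - u(A ∪ L_{j-1})`. This gives the first identity with
`A = {o_i}`. For the second, `b_{ir}` is a second difference of `u`, hence symmetric in `o_i` and
`l_r`, so `u(l_r | L_{r-1}) - b_{ir}` splits into marginals of `l_r` over `A ∪ L_{r-1}` for
`A = ∅, O_{i-1}, O_{i-1} ∪ {o_i}`, and the three resulting telescoping sums combine. -/

theorem Finset.sum_Icc_sub_pred {M : Type*} [AddCommGroup M] (g : ℕ → M) {j n : ℕ}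
    (hj1 : 1 ≤ j) (hjn : j ≤ n + 1) :
    ∑ r ∈ Icc j n, (g r - g (r - 1)) = g n - g (j - 1) := by
  obtain ⟨m, rfl⟩ : ∃ m, j = m + 1 := ⟨j - 1, by omega⟩
  rw [← Ico_add_one_right_eq_Icc, ← sum_Ico_add' (fun r => g r - g (r - 1))]
  simp only [Nat.add_sub_cancel]
  exact sum_Ico_sub g (by omega)

theorem IsPermList.toFinset_eq_univ {n : ℕ} {L : List (Fin n)} (hL : IsPermList L) :
    L.toFinset = univ :=
  eq_univ_of_forall fun x => List.mem_toFinset.2 (hL.2 x)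

theorem IsPermList.length_eq {n : ℕ} {L : List (Fin n)} (hL : IsPermList L) : L.length = n := by
  rw [← List.toFinset_card_of_nodup hL.1, hL.toFinset_eq_univ, card_univ, Fintype.card_fin]

theorem prefSet_length {n : ℕ} (L : List (Fin n)) : prefSet L L.length = L.toFinset := by
  simp [prefSet]

theorem prefSet_eq_insert_elemAt {n : ℕ} [NeZero n] (L : List (Fin n)) {r : ℕ} (hr1 : 1 ≤ r)
    (hr : r ≤ L.length) : prefSet L r = insert (elemAt L r) (prefSet L (r - 1)) := by
  obtain ⟨k, rfl⟩ : ∃ k, r = k + 1 := ⟨r - 1, by omega⟩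
  rw [elemAt, Nat.add_sub_cancel, List.getD_eq_getElem _ _ (by omega), prefSet, prefSet,
    ← List.take_concat_get' _ _ (by omega), List.toFinset_append, union_comm]
  rfl

theorem marg_sub_marg_insert_comm {n : ℕ} (f : Finset (Fin n) → ℝ) (a b : Fin n)
    (S : Finset (Fin n)) :
    marg f a S - marg f a (insert b S) = marg f b S - marg f b (insert a S) := by
  simp only [marg, insert_comm a b]
  ring

theorem sum_marg_union_prefSet {n : ℕ} [NeZero n] (f : Finset (Fin n) → ℝ) (A : Finset (Fin n))
    (L : List (Fin n)) {j : ℕ} (hj1 : 1 ≤ j) (hj : j ≤ L.length + 1) :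
    ∑ r ∈ Icc j L.length, marg f (elemAt L r) (A ∪ prefSet L (r - 1)) =
      f (A ∪ L.toFinset) - f (A ∪ prefSet L (j - 1)) := by
  have hstep : ∀ r ∈ Icc j L.length, marg f (elemAt L r) (A ∪ prefSet L (r - 1)) =
      f (A ∪ prefSet L r) - f (A ∪ prefSet L (r - 1)) := by
    intro r hr
    rw [mem_Icc] at hr
    rw [marg, prefSet_eq_insert_elemAt L (by omega) hr.2, union_insert]
  rw [sum_congr rfl hstep, sum_Icc_sub_pred (fun k => f (A ∪ prefSet L k)) hj1 hj,
    prefSet_length]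

theorem telescoping_identities_general (n : ℕ) [NeZero n] (u : Finset (Fin n) → ℝ)
    (L O : List (Fin n)) (hL : IsPermList L)
    (i j : ℕ) (hj1 : 1 ≤ j) (hjn : j ≤ n) :
    (marg u (elemAt O i) (prefSet L (j - 1)) +
        ∑ r ∈ Finset.Icc j n, marg u (elemAt L r) (insert (elemAt O i) (prefSet L (r - 1))) =
      u Finset.univ - u (prefSet L (j - 1))) ∧
    (marg u (elemAt O i) (prefSet O (i - 1) ∪ prefSet L (j - 1)) +
        ∑ r ∈ Finset.Icc j n, (marg u (elemAt L r) (prefSet L (r - 1)) - bmat u L O i r) =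
      u Finset.univ - u (prefSet L (j - 1))) ∧
    (marg u (elemAt O i) (prefSet L (j - 1)) +
        ∑ r ∈ Finset.Icc j n, marg u (elemAt L r) (insert (elemAt O i) (prefSet L (r - 1))) =
      marg u (elemAt O i) (prefSet O (i - 1) ∪ prefSet L (j - 1)) +
        ∑ r ∈ Finset.Icc j n, (marg u (elemAt L r) (prefSet L (r - 1)) - bmat u L O i r)) := by
  set o := elemAt O i
  set Oi := prefSet O (i - 1)
  have htelescope (A : Finset (Fin n)) :
      ∑ r ∈ Icc j n, marg u (elemAt L r) (A ∪ prefSet L (r - 1)) =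
        u univ - u (A ∪ prefSet L (j - 1)) := by
    have h := sum_marg_union_prefSet u A L hj1 (by rw [hL.length_eq]; omega)
    rwa [hL.length_eq, hL.toFinset_eq_univ, union_eq_right.2 (subset_univ A)] at h
  have hsum1 : ∑ r ∈ Icc j n, marg u (elemAt L r) (insert o (prefSet L (r - 1))) =
      u univ - u (insert o (prefSet L (j - 1))) := by
    simpa only [← insert_eq] using htelescope {o}
  have hsum2 : ∑ r ∈ Icc j n, (marg u (elemAt L r) (prefSet L (r - 1)) - bmat u L O i r) =
      u univ - u (prefSet L (j - 1)) - marg u o (Oi ∪ prefSet L (j - 1)) := by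
    have hsplit : ∀ r ∈ Icc j n, marg u (elemAt L r) (prefSet L (r - 1)) - bmat u L O i r =
        marg u (elemAt L r) (∅ ∪ prefSet L (r - 1)) - marg u (elemAt L r) (Oi ∪ prefSet L (r - 1))
          + marg u (elemAt L r) (insert o Oi ∪ prefSet L (r - 1)) := by
      intro r _
      rw [bmat, marg_sub_marg_insert_comm, empty_union, insert_union]
      ring
    rw [sum_congr rfl hsplit, sum_add_distrib, sum_sub_distrib, htelescope, htelescope,
      htelescope, empty_union, marg, insert_union]
    ring
  refine ⟨?_, ?_, ?_⟩
  · rw [hsum1, marg]; ring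
  · rw [hsum2]; ring
  · rw [hsum1, hsum2, marg]; ring

theorem telescoping_identities (n : ℕ) [NeZero n] (u : Finset (Fin n) → ℝ) (hu0 : u ∅ = 0)
    (hu_nonneg : ∀ S, 0 ≤ u S)
    (L O : List (Fin n)) (hL : IsPermList L) (hO : IsPermList O)
    (i j : ℕ) (hi1 : 1 ≤ i) (hin : i ≤ n) (hj1 : 1 ≤ j) (hjn : j ≤ n) :
    (marg u (elemAt O i) (prefSet L (j - 1)) +
        ∑ r ∈ Finset.Icc j n, marg u (elemAt L r) (insert (elemAt O i) (prefSet L (r - 1))) =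
      u Finset.univ - u (prefSet L (j - 1))) ∧
    (marg u (elemAt O i) (prefSet O (i - 1) ∪ prefSet L (j - 1)) +
        ∑ r ∈ Finset.Icc j n, (marg u (elemAt L r) (prefSet L (r - 1)) - bmat u L O i r) =
      u Finset.univ - u (prefSet L (j - 1))) ∧
    (marg u (elemAt O i) (prefSet L (j - 1)) +
        ∑ r ∈ Finset.Icc j n, marg u (elemAt L r) (insert (elemAt O i) (prefSet L (r - 1))) =
      marg u (elemAt O i) (prefSet O (i - 1) ∪ prefSet L (j - 1)) +
        ∑ r ∈ Finset.Icc j n, (marg u (elemAt L r) (prefSet L (r - 1)) - bmat u L O i r)) :=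
  telescoping_identities_general n u L O hL i j hj1 hjn
end

section
/- Suppose u : 2^[n] → ℝ≥0 is a normalized, monotone, submodular and second-order supermodular set function and c : 2^[n] → ℝ≥0 is modular with positive singleton costs. If a permutation L of [n] is locally optimal with respect to moves (no move-neighbor has strictly smaller objective value), then the objective value of L is at most 4 times the minimum objective value over all permutations of [n]. -/
open Finset

/-!
Write `m p t = u(o_p | O_{<p} ∪ L_{<t})`. Summed over `p` this telescopes to `u [n] - u L_{<t}`, so
Abel summation turns `obj L` into `∑_p ∑_t c(l_t) m p t`, while `obj O = ∑_p c(O_{≤p}) m p 0`.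
In row `p`, let `j_p` be the first position of `L` at which the prefix cost of `L` (that position
included) exceeds `2 c(O_{≤p})`. The columns before `j_p` contribute at most
`2 c(O_{≤p}) m p 0`, since `m p` is antitone by submodularity; the columns from `j_p` on contribute
at most `c(o_p) (u [n] - u L_{<j_p})`, because moving `o_p` forward to position `j_p` does not
improve `L`.
Exchanging the order of summation, these last terms add up to at most `obj L / 2`, whence
`obj L ≤ 2 obj O + obj L / 2`.
-/

lemma Monotone.exists_threshold {α : Type*} [LinearOrder α] {f : ℕ → α} (hf : Monotone f) {x : α}
    (h0 : f 0 ≤ x) (n : ℕ) : ∃ j ≤ n, f j ≤ x ∧ ∀ q, j ≤ q → q < n → x < f (q + 1) := by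
  classical
  have hex : ∃ k, n ≤ k ∨ x < f (k + 1) := ⟨n, Or.inl le_rfl⟩
  refine ⟨Nat.find hex, Nat.find_min' hex (Or.inl le_rfl), ?_, fun q hjq hqn => ?_⟩
  · rcases hj : Nat.find hex with _ | k
    · exact h0
    · exact not_lt.1 fun h => Nat.find_min hex (m := k) (by omega) (Or.inr h)
  · rcases Nat.find_spec hex with h | h
    · omega
    · exact h.trans_le (hf (by omega))

lemma sum_filter_partialSum_lt_le {d : ℕ → ℝ} (hd : ∀ p, 0 ≤ d p) {y : ℝ} (hy : 0 ≤ y) (n : ℕ) :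
    ∑ p ∈ (range n).filter (fun p => ∑ s ∈ range (p + 1), d s < y), d p ≤ y := by
  set F := (range n).filter (fun p => ∑ s ∈ range (p + 1), d s < y)
  rcases F.eq_empty_or_nonempty with hF | hF
  · rw [hF, sum_empty]
    exact hy
  · calc ∑ p ∈ F, d p ≤ ∑ p ∈ range (F.max' hF + 1), d p :=
          sum_le_sum_of_subset_of_nonneg
            (fun p hp => mem_range.2 (Nat.lt_succ_of_le (F.le_max' p hp)))
            (fun p _ _ => hd p)
      _ ≤ y := (mem_filter.1 (F.max'_mem hF)).2.le

lemma sum_mul_sub_le_half_sum {n : ℕ} {d C U : ℕ → ℝ} {j : ℕ → ℕ} (hd : ∀ p, 0 ≤ d p)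
    (hC : ∀ q, 0 ≤ C q) (hU : Monotone U) (hjn : ∀ p, j p ≤ n)
    (hjC : ∀ p < n, ∀ q, j p ≤ q → q < n → 2 * ∑ s ∈ range (p + 1), d s < C (q + 1)) :
    ∑ p ∈ range n, d p * (U n - U (j p)) ≤
      1 / 2 * ∑ q ∈ range n, C (q + 1) * (U (q + 1) - U q) := by
  have hfilter : ∀ q < n, ∑ p ∈ (range n).filter (fun p => j p ≤ q), d p ≤ C (q + 1) / 2 :=
    fun q hq => le_trans
      (sum_le_sum_of_subset_of_nonneg
        (fun p hp => by
          simp only [mem_filter, mem_range] at hp ⊢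
          exact ⟨hp.1, by linarith [hjC p hp.1 q hp.2 hq]⟩)
        (fun p _ _ => hd p))
      (sum_filter_partialSum_lt_le hd (by linarith [hC (q + 1)]) n)
  calc ∑ p ∈ range n, d p * (U n - U (j p))
      = ∑ p ∈ range n, ∑ q ∈ Ico (j p) n, d p * (U (q + 1) - U q) :=
        sum_congr rfl fun p _ => by rw [← mul_sum, sum_Ico_sub U (hjn p)]
    _ = ∑ q ∈ range n, (∑ p ∈ (range n).filter (fun p => j p ≤ q), d p) *
          (U (q + 1) - U q) := by
        rw [sum_comm' (t' := range n)
          (s' := fun q => (range n).filter (fun p => j p ≤ q)) (fun p q => by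
            simp only [mem_range, mem_Ico, mem_filter]
            tauto)]
        simp only [sum_mul]
    _ ≤ ∑ q ∈ range n, C (q + 1) / 2 * (U (q + 1) - U q) := by
        gcongr with q hq
        · exact sub_nonneg.2 (hU q.le_succ)
        · exact hfilter q (mem_range.1 hq)
    _ = 1 / 2 * ∑ q ∈ range n, C (q + 1) * (U (q + 1) - U q) := by
        rw [mul_sum]
        exact sum_congr rfl fun q _ => by ring

lemma List.insertIdx_length_append {α : Type*} (A l : List α) (x : α) :
    (A ++ l).insertIdx A.length x = A ++ x :: l := by
  induction A with
  | nil => simp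
  | cons a A ih => simp [List.insertIdx_succ_cons, ih]

lemma sum_range_sum_mul_sub (w U : ℕ → ℝ) (N : ℕ) :
    ∑ k ∈ range N, (∑ t ∈ range (k + 1), w t) * (U (k + 1) - U k) =
      ∑ t ∈ range N, w t * (U N - U t) := by
  induction N with
  | zero => simp
  | succ N ih =>
    rw [sum_range_succ, ih, sum_range_succ w, add_mul, sum_mul, ← add_assoc,
      ← sum_add_distrib, sum_range_succ (fun t => w t * (U (N + 1) - U t))]
    congr 1
    exact sum_congr rfl fun t _ => by ring

section SetFunction

variable {n : ℕ} {u : Finset (Fin n) → ℝ}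

lemma Mono.monotone (hu : Mono u) : Monotone u :=
  monotone_iff_forall_le_insert.2 fun S a _ => hu S a

lemma Mono.marg_nonneg (hu : Mono u) (e : Fin n) (S : Finset (Fin n)) : 0 ≤ marg u e S :=
  sub_nonneg.2 (hu S e)

lemma marg_of_mem {e : Fin n} {S : Finset (Fin n)} (h : e ∈ S) : marg u e S = 0 := by
  simp [marg, insert_eq_self.2 h]

lemma Submod.antitone_marg (hu : Submod u) (e : Fin n) : Antitone (marg u e) := by
  refine antitone_iff_forall_insert_le.2 fun S x hx => ?_
  by_cases he : e ∈ S
  · rw [marg_of_mem he, marg_of_mem (mem_insert_of_mem he)]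
  · exact hu S e x he hx

end SetFunction

section PrefixSet

variable {n : ℕ}

@[simp]
lemma prefSet_zero (L : List (Fin n)) : prefSet L 0 = ∅ := rfl

lemma prefSet_add (L : List (Fin n)) (a k : ℕ) :
    prefSet L (a + k) = (L.take a).toFinset ∪ prefSet (L.drop a) k := by
  rw [prefSet, List.take_add, List.toFinset_append, prefSet]

lemma prefSet_of_length_le (L : List (Fin n)) {k : ℕ} (h : L.length ≤ k) :
    prefSet L k = L.toFinset := by
  rw [prefSet, List.take_of_length_le h]

lemma prefSet_take (L : List (Fin n)) {k m : ℕ} (h : k ≤ m) :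
    prefSet (L.take m) k = prefSet L k := by
  rw [prefSet, List.take_take, min_eq_left h, prefSet]

lemma prefSet_mono (L : List (Fin n)) : Monotone (prefSet L) := fun j k h x hx => by
  rw [← prefSet_take L h] at hx
  simp only [prefSet, List.mem_toFinset] at hx ⊢
  exact List.take_subset _ _ hx

variable [NeZero n]

lemma prefSet_succ (L : List (Fin n)) {k : ℕ} (h : k < L.length) :
    prefSet L (k + 1) = insert (L.getD k default) (prefSet L k) := by
  ext x
  simp only [prefSet, List.take_add_one, List.getElem?_eq_getElem h, List.getD_eq_getElem _ _ h,
    Option.toList_some, List.mem_toFinset, List.mem_append, List.mem_singleton, mem_insert]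
  exact or_comm

lemma getD_mem_prefSet (L : List (Fin n)) {b t : ℕ} (hb : b < L.length) (ht : b < t) :
    L.getD b default ∈ prefSet L t := by
  rw [List.getD_eq_getElem _ _ hb, prefSet, List.mem_toFinset,
    ← List.getElem_take (j := t) (h := by simp [hb, ht])]
  exact List.getElem_mem _

lemma sum_prefSet_eq_sum_range (cs : Fin n → ℝ) {L : List (Fin n)} (hL : L.Nodup) {k : ℕ}
    (hk : k ≤ L.length) :
    ∑ e ∈ prefSet L k, cs e = ∑ t ∈ range k, cs (L.getD t default) := by
  induction k with
  | zero => simp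
  | succ k ih =>
    have hk' : k < L.length := hk
    have hnotin : L.getD k default ∉ prefSet L k := by
      rw [List.getD_eq_getElem _ _ hk', prefSet, List.mem_toFinset]
      intro hmem
      obtain ⟨i, hi, hik⟩ := List.getElem_of_mem hmem
      rw [List.getElem_take] at hik
      have := hL.getElem_inj_iff.1 hik
      rw [List.length_take] at hi
      omega
    rw [prefSet_succ L hk', sum_insert hnotin, ih hk'.le, sum_range_succ, add_comm]

end PrefixSet

namespace IsPermList

variable {n : ℕ} {L : List (Fin n)}

lemma toFinset_eq_univ_s7 (hL : IsPermList L) : L.toFinset = univ :=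
  eq_univ_iff_forall.2 fun x => List.mem_toFinset.2 (hL.2 x)

lemma length_eq_s7 (hL : IsPermList L) : L.length = n := by
  simpa [hL.toFinset_eq_univ_s7] using (List.toFinset_card_of_nodup hL.1).symm

lemma prefSet_of_le (hL : IsPermList L) {k : ℕ} (hk : n ≤ k) : prefSet L k = univ := by
  rw [prefSet_of_length_le L (hL.length_eq_s7.symm ▸ hk), hL.toFinset_eq_univ_s7]

lemma perm {M : List (Fin n)} (hL : IsPermList L) (h : L.Perm M) : IsPermList M :=
  ⟨h.nodup_iff.1 hL.1, fun x => h.subset (hL.2 x)⟩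

end IsPermList

section TailCost

variable {n : ℕ} [NeZero n] (u : Finset (Fin n) → ℝ) (cs : Fin n → ℝ)

/-- The objective of `Y` scheduled after the already placed set `F`, in Abel-summed form: each
element pays its cost times the value still missing when it is placed. -/
noncomputable def tailCost (F : Finset (Fin n)) (Y : List (Fin n)) : ℝ :=
  ∑ k ∈ range Y.length, cs (Y.getD k default) * (u univ - u (F ∪ prefSet Y k))

@[simp]
lemma tailCost_nil (F : Finset (Fin n)) : tailCost u cs F [] = 0 := by
  simp [tailCost]

lemma tailCost_cons (F : Finset (Fin n)) (x : Fin n) (Y : List (Fin n)) :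
    tailCost u cs F (x :: Y) = cs x * (u univ - u F) + tailCost u cs (insert x F) Y := by
  have hpref : ∀ k, prefSet (x :: Y) (k + 1) = insert x (prefSet Y k) := fun k => by
    rw [prefSet, List.take_succ_cons, List.toFinset_cons, prefSet]
  rw [tailCost, tailCost, List.length_cons, sum_range_succ', add_comm]
  simp only [hpref, prefSet_zero, List.getD_cons_succ, List.getD_cons_zero, union_empty,
    union_insert, insert_union]

lemma tailCost_append (F : Finset (Fin n)) (X Y : List (Fin n)) :
    tailCost u cs F (X ++ Y) = tailCost u cs F X + tailCost u cs (F ∪ X.toFinset) Y := by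
  induction X generalizing F with
  | nil => simp
  | cons x X ih =>
    rw [List.cons_append, tailCost_cons, tailCost_cons, ih, add_assoc, List.toFinset_cons,
      union_insert, insert_union]

variable {u cs} {c : Finset (Fin n) → ℝ}

lemma objective_eq_tailCost (hc : ∀ S, c S = ∑ i ∈ S, cs i) {P : List (Fin n)}
    (hP : IsPermList P) : objective u c P = tailCost u cs ∅ P := by
  have hcost : ∀ k ∈ range P.length,
      c (prefSet P (k + 1)) = ∑ t ∈ range (k + 1), cs (P.getD t default) :=
    fun k hk => by rw [hc, sum_prefSet_eq_sum_range cs hP.1 (mem_range.1 hk)]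
  rw [objective, sum_congr rfl fun k hk => by rw [hcost k hk],
    sum_range_sum_mul_sub (fun t => cs (P.getD t default)) (fun k => u (prefSet P k)),
    hP.prefSet_of_le hP.length_eq_s7.ge, tailCost]
  simp only [empty_union]

end TailCost

section Move

variable {n : ℕ} [NeZero n]

lemma moveList_append_cons (A B C : List (Fin n)) (e : Fin n) :
    moveList (A ++ B ++ e :: C) (A.length + B.length + 1) (A.length + 1) = A ++ e :: (B ++ C) := by
  have helem : elemAt (A ++ B ++ e :: C) (A.length + B.length + 1) = e := by
    simp [elemAt, List.getD_eq_getElem?_getD]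
  rw [moveList, helem, Nat.add_sub_cancel, Nat.add_sub_cancel,
    List.eraseIdx_append_of_length_le (by simp), List.length_append, Nat.sub_self,
    List.eraseIdx_cons_zero, List.append_assoc, List.insertIdx_length_append]

def IsMoveLocalMin (u c : Finset (Fin n) → ℝ) (L : List (Fin n)) : Prop :=
  ∀ L', IsMoveNeighbor L L' → objective u c L ≤ objective u c L'

namespace IsMoveLocalMin

variable {u c : Finset (Fin n) → ℝ} {cs : Fin n → ℝ} {L : List (Fin n)}

lemma sum_mul_marg_le_of_eq_append (hL : IsMoveLocalMin u c L)
    (hc : ∀ S, c S = ∑ i ∈ S, cs i) (hP : IsPermList L) {A B C : List (Fin n)} {e : Fin n}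
    (hdec : L = A ++ B ++ e :: C) :
    ∑ k ∈ range B.length, cs (B.getD k default) * marg u e (A.toFinset ∪ prefSet B k) ≤
      cs e * (u (A.toFinset ∪ B.toFinset) - u A.toFinset) := by
  by_cases hB : B = []
  · simp [hB]
  have hlen : A.length + B.length + 1 ≤ n := by
    simp [← hP.length_eq_s7, hdec]
  have hBpos : 0 < B.length := List.length_pos_iff.2 hB
  have hM : IsPermList (A ++ e :: (B ++ C)) :=
    hP.perm (hdec ▸ List.append_assoc A B (e :: C) ▸ List.perm_middle.append_left A)
  have hmove : objective u c L ≤ objective u c (A ++ e :: (B ++ C)) :=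
    hL _ ⟨A.length + B.length + 1, A.length + 1, by omega, hlen, by omega, by omega, by omega,
      by rw [hdec, moveList_append_cons]⟩
  have hdiff : tailCost u cs A.toFinset B - tailCost u cs (insert e A.toFinset) B =
      ∑ k ∈ range B.length, cs (B.getD k default) * marg u e (A.toFinset ∪ prefSet B k) := by
    rw [tailCost, tailCost, ← sum_sub_distrib]
    refine sum_congr rfl fun k _ => ?_
    rw [marg, insert_union]
    ring
  rw [objective_eq_tailCost hc hP, objective_eq_tailCost hc hM, hdec] at hmove
  simp only [tailCost_append, tailCost_cons, List.toFinset_append, empty_union,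
    insert_union] at hmove
  linarith

/-- Moving the element in position `b` forward to position `a` does not improve `L`. -/
lemma sum_Ico_mul_marg_le_sub (hL : IsMoveLocalMin u c L) (hc : ∀ S, c S = ∑ i ∈ S, cs i)
    (hP : IsPermList L) {a b : ℕ} (hab : a ≤ b) (hb : b < n) :
    ∑ t ∈ Ico a b, cs (L.getD t default) * marg u (L.getD b default) (prefSet L t) ≤
      cs (L.getD b default) * (u (prefSet L b) - u (prefSet L a)) := by
  have hbL : b < L.length := hP.length_eq_s7.symm ▸ hb
  set B := (L.drop a).take (b - a)
  have hAB : L.take a ++ B = L.take b := by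
    rw [← List.take_add, Nat.add_sub_cancel' hab]
  have hdec : L = L.take a ++ B ++ L.getD b default :: L.drop (b + 1) := by
    rw [hAB, List.getD_eq_getElem _ _ hbL, ← List.drop_eq_getElem_cons, List.take_append_drop]
  have key := hL.sum_mul_marg_le_of_eq_append hc hP hdec
  rw [← List.toFinset_append, hAB] at key
  change _ ≤ cs _ * (u (prefSet L b) - u (prefSet L a)) at key
  convert key using 1
  rw [sum_Ico_eq_sum_range, show B.length = b - a by simp [B]; omega]
  refine sum_congr rfl fun k hk => ?_
  have hk : k < b - a := mem_range.1 hk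
  rw [prefSet_add, prefSet_take _ hk.le]
  congr 2
  simp [B, List.getD_eq_getElem?_getD, hk]

lemma sum_Ico_mul_marg_le (hL : IsMoveLocalMin u c L) (hc : ∀ S, c S = ∑ i ∈ S, cs i)
    (hP : IsPermList L) (hu : Mono u) (hcs : ∀ i, 0 ≤ cs i) (e : Fin n) (j : ℕ) :
    ∑ t ∈ Ico j n, cs (L.getD t default) * marg u e (prefSet L t) ≤
      cs e * (u univ - u (prefSet L j)) := by
  obtain ⟨b, hbL, hbe⟩ := List.mem_iff_getElem.1 (hP.2 e)
  have hb : b < n := hP.length_eq_s7 ▸ hbL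
  rw [← List.getD_eq_getElem _ default hbL] at hbe
  subst hbe
  have hafter : ∑ t ∈ Ico (max j (b + 1)) n,
      cs (L.getD t default) * marg u (L.getD b default) (prefSet L t) = 0 :=
    sum_eq_zero fun t ht => by
      rw [marg_of_mem (getD_mem_prefSet L hbL (by have := (mem_Ico.1 ht).1; omega)), mul_zero]
  rcases le_or_gt j b with hjb | hbj
  · have hat : cs (L.getD b default) * marg u (L.getD b default) (prefSet L b) ≤
        cs (L.getD b default) * (u univ - u (prefSet L b)) :=
      mul_le_mul_of_nonneg_left (sub_le_sub_right (hu.monotone (subset_univ _)) _) (hcs _)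
    rw [max_eq_right (by omega)] at hafter
    rw [← sum_Ico_consecutive _ hjb hb.le, sum_eq_sum_Ico_succ_bot hb, hafter]
    linarith [hL.sum_Ico_mul_marg_le_sub hc hP hjb hb]
  · rw [max_eq_left hbj] at hafter
    rw [hafter]
    exact mul_nonneg (hcs _) (sub_nonneg.2 (hu.monotone (subset_univ _)))

lemma sum_mul_marg_union_le (hL : IsMoveLocalMin u c L) (hc : ∀ S, c S = ∑ i ∈ S, cs i)
    (hP : IsPermList L) (hu : Mono u) (hs : Submod u) (hcs : ∀ i, 0 ≤ cs i)
    (T : Finset (Fin n)) (e : Fin n) {j : ℕ} (hj : j ≤ n) :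
    ∑ t ∈ range n, cs (L.getD t default) * marg u e (T ∪ prefSet L t) ≤
      c (prefSet L j) * marg u e T + cs e * (u univ - u (prefSet L j)) := by
  rw [← sum_range_add_sum_Ico _ hj]
  gcongr ?_ + ?_
  · rw [hc, sum_prefSet_eq_sum_range cs hP.1 (hj.trans hP.length_eq_s7.ge), sum_mul]
    gcongr with t
    exacts [hcs _, hs.antitone_marg e subset_union_left]
  · refine le_trans (sum_le_sum fun t _ => ?_) (hL.sum_Ico_mul_marg_le hc hP hu hcs e j)
    exact mul_le_mul_of_nonneg_left (hs.antitone_marg e subset_union_right) (hcs _)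

end IsMoveLocalMin

section Objective

variable {n : ℕ} [NeZero n] {u c : Finset (Fin n) → ℝ}

lemma objective_eq_sum_mul_marg (O : List (Fin n)) :
    objective u c O = ∑ p ∈ range O.length,
      c (prefSet O (p + 1)) * marg u (O.getD p default) (prefSet O p) :=
  sum_congr rfl fun p hp => by rw [marg, ← prefSet_succ O (mem_range.1 hp)]

lemma IsPermList.sum_marg_prefSet_union {O : List (Fin n)} (hO : IsPermList O)
    (S : Finset (Fin n)) :
    ∑ p ∈ range n, marg u (O.getD p default) (prefSet O p ∪ S) = u univ - u S := by
  have hstep : ∀ p ∈ range n, marg u (O.getD p default) (prefSet O p ∪ S) =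
      u (prefSet O (p + 1) ∪ S) - u (prefSet O p ∪ S) := fun p hp => by
    rw [marg, prefSet_succ O ((mem_range.1 hp).trans_eq hO.length_eq_s7.symm), insert_union]
  rw [sum_congr rfl hstep, sum_range_sub (fun p => u (prefSet O p ∪ S)),
    hO.prefSet_of_le le_rfl, prefSet_zero, empty_union,
    union_eq_left.2 (subset_univ S)]

lemma objective_eq_sum_sum_mul_marg {cs : Fin n → ℝ} (hc : ∀ S, c S = ∑ i ∈ S, cs i)
    {L O : List (Fin n)} (hL : IsPermList L) (hO : IsPermList O) :
    objective u c L = ∑ p ∈ range n, ∑ t ∈ range n,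
      cs (L.getD t default) * marg u (O.getD p default) (prefSet O p ∪ prefSet L t) := by
  rw [objective_eq_tailCost hc hL, tailCost, hL.length_eq_s7, sum_comm]
  refine sum_congr rfl fun t _ => ?_
  rw [← mul_sum, hO.sum_marg_prefSet_union, empty_union]

lemma IsPermList.sum_mul_sub_le_half_objective {cs : Fin n → ℝ} (hc : ∀ S, c S = ∑ i ∈ S, cs i)
    (hcs : ∀ i, 0 ≤ cs i) (hu : Mono u) {L O : List (Fin n)} (hL : IsPermList L)
    (hO : IsPermList O) {j : ℕ → ℕ} (hjn : ∀ p, j p ≤ n)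
    (hj : ∀ p q, j p ≤ q → q < n → 2 * c (prefSet O (p + 1)) < c (prefSet L (q + 1))) :
    ∑ p ∈ range n, cs (O.getD p default) * (u univ - u (prefSet L (j p))) ≤
      1 / 2 * objective u c L := by
  have h := sum_mul_sub_le_half_sum (d := fun p => cs (O.getD p default))
    (C := fun k => c (prefSet L k)) (U := fun k => u (prefSet L k)) (fun p => hcs _)
    (fun q => hc _ ▸ sum_nonneg fun i _ => hcs i)
    (fun _ _ h => hu.monotone (prefSet_mono L h)) hjn fun p hp q hjq hq => by
      rw [← sum_prefSet_eq_sum_range cs hO.1 (by rw [hO.length_eq_s7]; omega), ← hc]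
      exact hj p q hjq hq
  rw [hL.prefSet_of_le le_rfl] at h
  rwa [objective, hL.length_eq_s7]

end Objective

theorem local_opt_four_approx_general (n : ℕ) [NeZero n] (u c : Finset (Fin n) → ℝ) (cs : Fin n → ℝ)
    (hu_mono : Mono u)
    (hu_sub : Submod u)
    (hcs_pos : ∀ i, 0 < cs i) (hc : ∀ S, c S = ∑ i ∈ S, cs i)
    (L : List (Fin n)) (hL : IsPermList L)
    (hopt : ∀ L', IsMoveNeighbor L L' → objective u c L ≤ objective u c L') :
    ∀ O, IsPermList O → objective u c L ≤ 4 * objective u c O := by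
  intro O hO
  have hcs : ∀ i, 0 ≤ cs i := fun i => (hcs_pos i).le
  have hc_mono : Monotone c := fun S T hST => by
    simpa only [hc] using sum_le_sum_of_subset_of_nonneg hST fun i _ _ => hcs i
  have hc0 : c ∅ = 0 := by rw [hc, sum_empty]
  have hcL : Monotone fun k => c (prefSet L k) := fun _ _ h => hc_mono (prefSet_mono L h)
  choose j hjn hjC hjlt using fun p => hcL.exists_threshold (x := 2 * c (prefSet O (p + 1)))
    (by simp only [prefSet_zero]; linarith [hc_mono (empty_subset (prefSet O (p + 1)))]) n
  have hrows : objective u c L ≤ ∑ p ∈ range n,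
      (c (prefSet L (j p)) * marg u (O.getD p default) (prefSet O p) +
        cs (O.getD p default) * (u univ - u (prefSet L (j p)))) := by
    rw [objective_eq_sum_sum_mul_marg hc hL hO]
    exact sum_le_sum fun p _ => IsMoveLocalMin.sum_mul_marg_union_le hopt hc hL hu_mono
      hu_sub hcs _ _ (hjn p)
  have hhead : ∑ p ∈ range n, c (prefSet L (j p)) * marg u (O.getD p default) (prefSet O p)
      ≤ 2 * objective u c O := by
    rw [objective_eq_sum_mul_marg, hO.length_eq_s7, mul_sum]
    refine sum_le_sum fun p _ => ?_
    rw [← mul_assoc]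
    exact mul_le_mul_of_nonneg_right (hjC p) (hu_mono.marg_nonneg _ _)
  have htail := hL.sum_mul_sub_le_half_objective hc hcs hu_mono hO hjn hjlt
  rw [sum_add_distrib] at hrows
  linarith

theorem local_opt_four_approx (n : ℕ) [NeZero n] (u c : Finset (Fin n) → ℝ) (cs : Fin n → ℝ)
    (hu0 : u ∅ = 0) (hu_nonneg : ∀ S, 0 ≤ u S) (hu_mono : Mono u)
    (hu_sub : Submod u) (hu_sos : SOSupermod u)
    (hcs_pos : ∀ i, 0 < cs i) (hc : ∀ S, c S = ∑ i ∈ S, cs i)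
    (L : List (Fin n)) (hL : IsPermList L)
    (hopt : ∀ L', IsMoveNeighbor L L' → objective u c L ≤ objective u c L') :
    ∀ O, IsPermList O → objective u c L ≤ 4 * objective u c O :=
  local_opt_four_approx_general n u c cs hu_mono hu_sub hcs_pos hc L hL hopt
end Move
end
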